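/- The function T(s) = (−2s + e^s − e^{-s}(2s+3) + 2)/(4s²) is nonnegative for all nonzero real s. -/

import Mathlib

noncomputable def T (s : ℝ) : ℝ :=
  (-2 * s + Real.exp s - Real.exp (-s) * (2 * s + 3) + 2) / (4 * s ^ 2)

/-!
Multiplying the numerator of `T` by `eˢ` gives `g s = e²ˢ + (2 - 2s) eˢ - 2s - 3`, with
`g' s = 2 eˢ (2 sinh s - s)`. Since `sinh` lies above the identity on `[0, ∞)` and below it on
`(-∞, 0]`, `g'` has the sign of `s`, so `g` attains its minimum `g 0 = 0` at `0`.
-/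

open Real Set

noncomputable def numeratorMulExp (s : ℝ) : ℝ :=
  exp (2 * s) + (2 - 2 * s) * exp s - 2 * s - 3

lemma hasDerivAt_numeratorMulExp (x : ℝ) :
    HasDerivAt numeratorMulExp (2 * exp x * (2 * sinh x - x)) x := by
  have hexp2 : exp (2 * x) = exp x * exp x := by rw [two_mul, exp_add]
  have hinv : exp x * exp (-x) = 1 := by rw [← exp_add, add_neg_cancel, exp_zero]
  have h : HasDerivAt numeratorMulExp
      (exp (2 * x) * 2 + (-2 * exp x + (2 - 2 * x) * exp x) - 2) x :=
    ((((hasDerivAt_id' x).const_mul 2).exp.add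
      (((hasDerivAt_id' x).const_mul 2).const_sub 2 |>.mul (hasDerivAt_exp x))).sub
      ((hasDerivAt_id' x).const_mul 2) |>.sub_const 3).congr_deriv (by ring)
  refine h.congr_deriv ?_
  rw [sinh_eq, hexp2]
  linear_combination 2 * hinv

lemma deriv_numeratorMulExp_nonpos {x : ℝ} (hx : x ≤ 0) :
    deriv numeratorMulExp x ≤ 0 := by
  rw [(hasDerivAt_numeratorMulExp x).deriv]
  have hsinh : sinh x ≤ 0 := sinh_nonpos_iff.mpr hx
  have hself : sinh x ≤ x := sinh_le_self_iff.mpr hx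
  exact mul_nonpos_of_nonneg_of_nonpos (by positivity) (by linarith)

lemma deriv_numeratorMulExp_nonneg {x : ℝ} (hx : 0 ≤ x) :
    0 ≤ deriv numeratorMulExp x := by
  rw [(hasDerivAt_numeratorMulExp x).deriv]
  have hsinh : 0 ≤ sinh x := sinh_nonneg_iff.mpr hx
  have hself : x ≤ sinh x := self_le_sinh_iff.mpr hx
  exact mul_nonneg (by positivity) (by linarith)

lemma numeratorMulExp_nonneg (s : ℝ) : 0 ≤ numeratorMulExp s := by
  have hdiff : Differentiable ℝ numeratorMulExp :=
    fun x ↦ (hasDerivAt_numeratorMulExp x).differentiableAt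
  have hmin : IsMinOn numeratorMulExp univ 0 :=
    isMinOn_univ_of_deriv hdiff.continuous.continuousAt hdiff.differentiableOn
      hdiff.differentiableOn (fun x hx ↦ deriv_numeratorMulExp_nonpos hx.le)
      (fun x hx ↦ deriv_numeratorMulExp_nonneg hx.le)
  have hzero : numeratorMulExp 0 = 0 := by norm_num [numeratorMulExp]
  simpa [hzero] using hmin (mem_univ s)

lemma numerator_eq_exp_neg_mul_numeratorMulExp (s : ℝ) :
    -2 * s + exp s - exp (-s) * (2 * s + 3) + 2 = exp (-s) * numeratorMulExp s := by
  have hexp2 : exp (2 * s) * exp (-s) = exp s := by rw [← exp_add]; ring_nf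
  have hinv : exp s * exp (-s) = 1 := by rw [← exp_add, add_neg_cancel, exp_zero]
  simp only [numeratorMulExp]
  linear_combination -hexp2 - (2 - 2 * s) * hinv

theorem stmt8_general (s : ℝ) : 0 ≤ T s := by
  rw [T, numerator_eq_exp_neg_mul_numeratorMulExp]
  have := numeratorMulExp_nonneg s
  positivity

theorem stmt8 (s : ℝ) (hs : s ≠ 0) : 0 ≤ T s :=
  stmt8_general s
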